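/- Let A be a pre-associative algebra with operations * and ·(juxtaposition) satisfying (x*y)*z = x*(y*z), (x*y)z = x(yz), and x(y*z) = (xy)*z + x(yz) − (xy)z. On the space Â = A ⊕ Ā (two copies of A, with the second copy written ū for u ∈ A), define u·v = u*v, ū·v = (u*v)‾ − (uv)‾, u·v̄ = (uv)‾, ū·v̄ = 0. Then Â is an associative algebra. -/

import Mathlib

/-! The product is bilinear and `Ā · Ā = 0`, so associativity only has to be checked on
triples of homogeneous elements with at most one barred factor. With no bar it is the
associativity of `*`, with a bar on the right it is the second axiom, with a bar in the middle
the third, and with a bar on the left all three together. -/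

variable {k A : Type*} [Field k] [AddCommGroup A] [Module k A]

/-- The multiplication on `Â = A ⊕ Ā` (a pair `(x, y)` represents `x + ȳ`):
`u·v = u*v`, `ū·v = (u*v)‾ − (uv)‾`, `u·v̄ = (uv)‾`, `ū·v̄ = 0`. -/
def hatMul (st ju : A →ₗ[k] A →ₗ[k] A) (p q : A × A) : A × A :=
  (st p.1 q.1, st p.2 q.1 - ju p.2 q.1 + ju p.1 q.2)

/-- If `A` is a pre-associative (dendriform) algebra with operations `*` (`st`) and
juxtaposition (`ju`), then the multiplication defined above on `Â = A ⊕ Ā`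
is associative, i.e. `Â` is an associative algebra. -/
theorem stmt_6 (st ju : A →ₗ[k] A →ₗ[k] A)
    (h1 : ∀ x y z : A, st (st x y) z = st x (st y z))
    (h2 : ∀ x y z : A, ju (st x y) z = ju x (ju y z))
    (h3 : ∀ x y z : A, ju x (st y z) = st (ju x y) z + ju x (ju y z) - ju (ju x y) z) :
    ∀ p q r : A × A, hatMul st ju (hatMul st ju p q) r = hatMul st ju p (hatMul st ju q r) := by
  rintro ⟨u, u'⟩ ⟨v, v'⟩ ⟨w, w'⟩
  have bar_left : st (st u' v - ju u' v) w - ju (st u' v - ju u' v) w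
      = st u' (st v w) - ju u' (st v w) := by
    simp only [map_sub, LinearMap.sub_apply, h1, h2, h3]
    abel
  have bar_middle : st (ju u v') w - ju (ju u v') w = ju u (st v' w - ju v' w) := by
    rw [map_sub, h3]
    abel
  have bar_right : ju (st u v) w' = ju u (ju v w') := h2 u v w'
  simp only [hatMul, Prod.mk.injEq, map_add, LinearMap.add_apply]
  refine ⟨h1 u v w, ?_⟩
  rw [← bar_left, ← bar_middle, bar_right]
  abel
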